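/- arXiv:1410.7021 — 2 statements merged into one kernel-verified Lean document; each statement's English description precedes it below -/
import Mathlib

section
/- Let n ≥ 1, let A be an abelian group and let Φ : 𝒫^n_o → A be a valuation. Define Ψ : 𝒫^n → A by Ψ(P) = Φ(conv({o} ∪ P)) for all P ∈ 𝒫^n. Then Ψ is a valuation on 𝒫^n. -/
open scoped Pointwise
open MeasureTheory Set

noncomputable section

abbrev Euc (n : ℕ) := EuclideanSpace ℝ (Fin n)

/-- `P` is a convex polytope in `ℝ^n`: the convex hull of a nonempty finite set. -/
def IsPolytope (n : ℕ) (P : Set (Euc n)) : Prop :=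
  ∃ S : Finset (Euc n), S.Nonempty ∧ P = convexHull ℝ (S : Set (Euc n))

/-- Support function `h(K, u)`. -/
def suppFn {n : ℕ} (K : Set (Euc n)) (u : Euc n) : ℝ :=
  sSup ((fun x => (inner ℝ x u : ℝ)) '' K)

/-- The face `F(P, v) = P ∩ {x : ⟪x, v⟫ = h(P, v)}`. -/
def face {n : ℕ} (P : Set (Euc n)) (v : Euc n) : Set (Euc n) :=
  {x | x ∈ P ∧ (inner ℝ x v : ℝ) = suppFn P v}

/-- `(n-1)`-dimensional volume ((n-1)-dimensional Hausdorff measure). -/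
def voln1 {n : ℕ} (s : Set (Euc n)) : ℝ :=
  (Measure.hausdorffMeasure ((n : ℝ) - 1) s).toReal

/-- Dimension of a convex set: the rank of its vector span (direction of its affine hull). -/
def pdim {n : ℕ} (P : Set (Euc n)) : ℕ := Module.finrank ℝ (vectorSpan ℝ P)

/-- `𝒩(P)`: unit outer normals of facets of `P`. -/
def normals (n : ℕ) (P : Set (Euc n)) : Set (Euc n) :=
  {v | ‖v‖ = 1 ∧ pdim (face P v) = n - 1}

/-- Application of a matrix to a vector of `ℝ^n`. -/
def apM {n : ℕ} (A : Matrix (Fin n) (Fin n) ℝ) (x : Euc n) : Euc n :=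
  (EuclideanSpace.equiv (Fin n) ℝ).symm (A.mulVec (EuclideanSpace.equiv (Fin n) ℝ x))

/-- Image of a set under a matrix. -/
def mapM {n : ℕ} (A : Matrix (Fin n) (Fin n) ℝ) (P : Set (Euc n)) : Set (Euc n) :=
  apM A '' P

/-- The standard basis vectors `e i`. -/
def ee (n : ℕ) (i : Fin n) : Euc n := EuclideanSpace.single i 1

/-- The standard simplex `T^n = conv{o, e₁, …, e_n}`. -/
def stdSimp (n : ℕ) : Set (Euc n) := convexHull ℝ (insert 0 (Set.range (ee n)))

/-- `h(Π_p^{±,>} P, u)^p` (for `gt = true`) resp. `h(Π_p^{±,<} P, u)^p` (for `gt = false`),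
where `pos = true` gives the `+` (positive part) version and `pos = false` the `−` version. -/
def projFn (n : ℕ) (p : ℝ) (pos gt : Bool) (P : Set (Euc n)) (u : Euc n) : ℝ :=
  ∑ᶠ v ∈ {v | v ∈ normals n P ∧ (if gt then 0 < suppFn P v else suppFn P v < 0)},
    voln1 (face P v) * |suppFn P v| ^ (1 - p) *
      (max ((if pos then (1 : ℝ) else -1) * (inner ℝ v u : ℝ)) 0) ^ p

/-- `h(Π_p^± P, u)^p`, the (p-th power of the support function of the) asymmetric
`L_p`-projection body of `P ∈ 𝒫ⁿₒ`. -/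
def pipFn (n : ℕ) (p : ℝ) (pos : Bool) (P : Set (Euc n)) (u : Euc n) : ℝ :=
  ∑ᶠ v ∈ {v | v ∈ normals n P ∧ (0 : Euc n) ∉ face P v},
    voln1 (face P v) * suppFn P v ^ (1 - p) *
      (max ((if pos then (1 : ℝ) else -1) * (inner ℝ v u : ℝ)) 0) ^ p

/-- `Δ_p^± P`, where `pos = true` gives `Δ_p^+ = h(Π_p^{+,>}·)^p − h(Π_p^{−,<}·)^p` and
`pos = false` gives `Δ_p^- = h(Π_p^{−,>}·)^p − h(Π_p^{+,<}·)^p`. -/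
def delFn (n : ℕ) (p : ℝ) (pos : Bool) (P : Set (Euc n)) (u : Euc n) : ℝ :=
  projFn n p pos true P u - projFn n p (!pos) false P u

/-!
Write `C(P) = conv({o} ∪ P)`. If `P`, `Q` and `P ∪ Q` are convex, then
`C(P ∪ Q) = C(P) ∪ C(Q)` and `C(P ∩ Q) = C(P) ∩ C(Q)`. For the latter, a point `x ≠ o` of
`C(P) ∩ C(Q)` lies on segments `[o, p]` and `[o, q]` with `p ∈ P`, `q ∈ Q`, so one of `p`, `q`,
say `q`, lies on `[o, p]` beyond `x`. The segment `[q, p]` is connected, contained in `P ∪ Q` and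
covered by the closed sets `P` and `Q`, so it meets `P ∩ Q` in a point `r`, and then
`x ∈ [o, r] ⊆ C(P ∩ Q)`. Hence the valuation identity of `Φ` at `C(P)`, `C(Q)` is that of `Ψ`
at `P`, `Q`.
-/

section Cone

variable {E : Type*} [AddCommGroup E] [Module ℝ E] {P Q : Set E} {a x : E}

theorem mem_convexHull_insert_iff_exists_wbtw (hP : Convex ℝ P) (hne : P.Nonempty) :
    x ∈ convexHull ℝ (insert a P) ↔ ∃ p ∈ P, Wbtw ℝ a x p := by
  simp [convexHull_insert hne, hP.convexHull_eq, convexJoin_singleton_left,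
    mem_segment_iff_wbtw]

theorem convexHull_insert_union (hP : Convex ℝ P) (hQ : Convex ℝ Q) (hPQ : Convex ℝ (P ∪ Q))
    (hPne : P.Nonempty) (hQne : Q.Nonempty) :
    convexHull ℝ (insert a (P ∪ Q)) =
      convexHull ℝ (insert a P) ∪ convexHull ℝ (insert a Q) := by
  rw [convexHull_insert hPne, convexHull_insert hQne,
    convexHull_insert (hPne.mono subset_union_left), hP.convexHull_eq, hQ.convexHull_eq,
    hPQ.convexHull_eq, convexJoin_union_right]

theorem Wbtw.wbtw_or_wbtw_of_wbtw {p q : E} (hp : Wbtw ℝ a x p) (hq : Wbtw ℝ a x q)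
    (hx : x ≠ a) : Wbtw ℝ a p q ∨ Wbtw ℝ a q p :=
  wbtw_total_of_sameRay_vsub_left <|
    hp.sameRay_vsub_left.symm.trans hq.sameRay_vsub_left fun h =>
      (hx (vsub_eq_zero_iff_eq.1 h)).elim

variable [TopologicalSpace E] [ContinuousAdd E] [ContinuousSMul ℝ E]

theorem segment_inter_inter_nonempty (hPc : IsClosed P) (hQc : IsClosed Q)
    (hPQ : Convex ℝ (P ∪ Q)) {p q : E} (hp : p ∈ P) (hq : q ∈ Q) :
    (segment ℝ p q ∩ (P ∩ Q)).Nonempty :=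
  isPreconnected_closed_iff.1 (convex_segment p q).isPreconnected P Q hPc hQc
    (hPQ.segment_subset (mem_union_left Q hp) (mem_union_right P hq))
    ⟨p, left_mem_segment ℝ p q, hp⟩ ⟨q, right_mem_segment ℝ p q, hq⟩

theorem mem_convexHull_insert_inter_of_wbtw (hPc : IsClosed P) (hQc : IsClosed Q)
    (hPQ : Convex ℝ (P ∪ Q)) {p q : E} (hp : p ∈ P) (hq : q ∈ Q)
    (hxq : Wbtw ℝ a x q) (hqp : Wbtw ℝ a q p) :
    x ∈ convexHull ℝ (insert a (P ∩ Q)) := by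
  obtain ⟨r, hr, hrPQ⟩ := segment_inter_inter_nonempty hPc hQc hPQ hp hq
  have hxr : Wbtw ℝ a x r :=
    (hqp.trans_right_left (wbtw_comm.1 (mem_segment_iff_wbtw.1 hr))).trans_left hxq
  exact segment_subset_convexHull (mem_insert a _) (mem_insert_of_mem a hrPQ)
    (mem_segment_iff_wbtw.2 hxr)

theorem convexHull_insert_inter (hP : Convex ℝ P) (hQ : Convex ℝ Q) (hPc : IsClosed P)
    (hQc : IsClosed Q) (hPQ : Convex ℝ (P ∪ Q)) (hPne : P.Nonempty) (hQne : Q.Nonempty) :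
    convexHull ℝ (insert a (P ∩ Q)) =
      convexHull ℝ (insert a P) ∩ convexHull ℝ (insert a Q) := by
  refine Subset.antisymm (subset_inter (convexHull_mono (insert_subset_insert inter_subset_left))
    (convexHull_mono (insert_subset_insert inter_subset_right))) ?_
  rintro x ⟨hxP, hxQ⟩
  obtain ⟨p, hp, hxp⟩ := (mem_convexHull_insert_iff_exists_wbtw hP hPne).1 hxP
  obtain ⟨q, hq, hxq⟩ := (mem_convexHull_insert_iff_exists_wbtw hQ hQne).1 hxQ
  rcases eq_or_ne x a with rfl | hx
  · exact subset_convexHull ℝ _ (mem_insert x _)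
  rcases hxp.wbtw_or_wbtw_of_wbtw hxq hx with hpq | hqp
  · rw [inter_comm]
    exact mem_convexHull_insert_inter_of_wbtw hQc hPc (union_comm P Q ▸ hPQ) hq hp hxp hpq
  · exact mem_convexHull_insert_inter_of_wbtw hPc hQc hPQ hp hq hxq hqp

end Cone

namespace IsPolytope

variable {n : ℕ} {P : Set (Euc n)}

theorem convex (hP : IsPolytope n P) : Convex ℝ P := by
  obtain ⟨S, -, rfl⟩ := hP
  exact convex_convexHull ℝ _

theorem isClosed (hP : IsPolytope n P) : IsClosed P := by
  obtain ⟨S, -, rfl⟩ := hP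
  exact (S.finite_toSet.isCompact_convexHull ℝ).isClosed

theorem nonempty (hP : IsPolytope n P) : P.Nonempty := by
  obtain ⟨S, hS, rfl⟩ := hP
  exact (Finset.coe_nonempty.2 hS).mono (subset_convexHull ℝ _)

theorem convexHull_insert (hP : IsPolytope n P) (a : Euc n) :
    IsPolytope n (convexHull ℝ (insert a P)) := by
  classical
  obtain ⟨S, -, rfl⟩ := hP
  refine ⟨insert a S, Finset.insert_nonempty a S, ?_⟩
  rw [Finset.coe_insert, insert_eq, insert_eq, convexHull_convexHull_union_right]

end IsPolytope

theorem stmt2_general (n : ℕ) {A : Type*} [AddCommGroup A]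
    (Φ : Set (Euc n) → A)
    (hval : ∀ P Q : Set (Euc n), IsPolytope n P → (0 : Euc n) ∈ P →
      IsPolytope n Q → (0 : Euc n) ∈ Q → IsPolytope n (P ∪ Q) →
      Φ (P ∪ Q) + Φ (P ∩ Q) = Φ P + Φ Q)
    (Ψ : Set (Euc n) → A)
    (hΨ : ∀ P : Set (Euc n), Ψ P = Φ (convexHull ℝ (insert (0 : Euc n) P))) :
    ∀ P Q : Set (Euc n), IsPolytope n P → IsPolytope n Q → IsPolytope n (P ∪ Q) →
      Ψ (P ∪ Q) + Ψ (P ∩ Q) = Ψ P + Ψ Q := by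
  intro P Q hP hQ hPQ
  have hunion : convexHull ℝ (insert 0 (P ∪ Q)) =
      convexHull ℝ (insert 0 P) ∪ convexHull ℝ (insert 0 Q) :=
    convexHull_insert_union hP.convex hQ.convex hPQ.convex hP.nonempty hQ.nonempty
  have hinter : convexHull ℝ (insert 0 (P ∩ Q)) =
      convexHull ℝ (insert 0 P) ∩ convexHull ℝ (insert 0 Q) :=
    convexHull_insert_inter hP.convex hQ.convex hP.isClosed hQ.isClosed hPQ.convex
      hP.nonempty hQ.nonempty
  have hapex : ∀ R : Set (Euc n), (0 : Euc n) ∈ convexHull ℝ (insert 0 R) :=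
    fun R => subset_convexHull ℝ _ (mem_insert 0 R)
  simp only [hΨ, hunion, hinter]
  exact hval _ _ (hP.convexHull_insert 0) (hapex P) (hQ.convexHull_insert 0) (hapex Q)
    (hunion ▸ hPQ.convexHull_insert 0)

/-- If `Φ` is a valuation on `𝒫ⁿₒ` with values in an abelian group, then
`Ψ(P) = Φ(conv({o} ∪ P))` defines a valuation on `𝒫ⁿ`. -/
theorem stmt2 (n : ℕ) (hn : 1 ≤ n) {A : Type*} [AddCommGroup A]
    (Φ : Set (Euc n) → A)
    (hval : ∀ P Q : Set (Euc n), IsPolytope n P → (0 : Euc n) ∈ P →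
      IsPolytope n Q → (0 : Euc n) ∈ Q → IsPolytope n (P ∪ Q) →
      Φ (P ∪ Q) + Φ (P ∩ Q) = Φ P + Φ Q)
    (Ψ : Set (Euc n) → A)
    (hΨ : ∀ P : Set (Euc n), Ψ P = Φ (convexHull ℝ (insert (0 : Euc n) P))) :
    ∀ P Q : Set (Euc n), IsPolytope n P → IsPolytope n Q → IsPolytope n (P ∪ Q) →
      Ψ (P ∪ Q) + Ψ (P ∩ Q) = Ψ P + Ψ Q :=
  stmt2_general n Φ hval Ψ hΨ
end
end

section
/- Let n ≥ 1, let V be a real vector space and let f : ℝ × S^{n−1} → V be any function. Define Φ : 𝒫^n → V by Φ(P) = Σ_{v ∈ 𝒩(P)} vol_{n−1}(F(P,v)) · f(h(P,v), v) for all P ∈ 𝒫^n. Then Φ is a valuation: Φ(P ∪ Q) + Φ(P ∩ Q) = Φ(P) + Φ(Q) for all P, Q ∈ 𝒫^n with P ∪ Q ∈ 𝒫^n. -/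
open scoped Pointwise
open MeasureTheory Set

noncomputable section

/-! For a unit vector `v` compare `h(P,v)` and `h(Q,v)`, say `h(Q,v) ≤ h(P,v)`. Since `P ∪ Q`
is convex, the segment from a point of `F(Q,v)` to a point of `F(P,v)` is covered by the two
closed sets `P` and `Q`, so by connectedness it meets `P ∩ Q`; comparing heights shows that the
meeting point lies in `F(Q,v)`. Hence `h(P ∩ Q,v) = h(Q,v)` and `F(P ∩ Q,v) = P ∩ F(Q,v)`.
If `h(Q,v) < h(P,v)`, then `F(P ∪ Q,v) = F(P,v)` and `F(P ∩ Q,v) = F(Q,v)`, so the `v`-terms of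
both sides agree. If the heights are equal, `F(P ∪ Q,v) = F(P,v) ∪ F(Q,v)` and
`F(P ∩ Q,v) = F(P,v) ∩ F(Q,v)` lie in one hyperplane, where `vol_{n-1}` is a finite measure.
Faces that are not facets have `vol_{n-1} = 0`, so restricting the sum to `𝒩(P)` changes
nothing, and only finitely many `v` contribute. -/

open Module
open scoped RealInnerProductSpace

section General

variable {E : Type*}

theorem exists_mem_inter_segment_of_convex_union [AddCommGroup E] [Module ℝ E]
    [TopologicalSpace E] [ContinuousAdd E] [ContinuousSMul ℝ E] {K L : Set E}
    (hK : IsClosed K) (hL : IsClosed L) (hU : Convex ℝ (K ∪ L)) {x y : E}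
    (hx : x ∈ L) (hy : y ∈ K) : ∃ z ∈ segment ℝ x y, z ∈ K ∩ L :=
  isPreconnected_closed_iff.mp (convex_segment x y).isPreconnected K L hK hL
    (hU.segment_subset (Or.inr hx) (Or.inl hy))
    ⟨y, right_mem_segment ℝ x y, hy⟩ ⟨x, left_mem_segment ℝ x y, hx⟩

variable [NormedAddCommGroup E] [InnerProductSpace ℝ E]

theorem vectorSpan_le_orthogonal_of_inner_eq {S : Set E} {v : E} {c : ℝ}
    (hS : ∀ x ∈ S, ⟪x, v⟫ = c) : vectorSpan ℝ S ≤ (ℝ ∙ v)ᗮ := by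
  rw [vectorSpan_def, Submodule.span_le]
  rintro _ ⟨x, hx, y, hy, rfl⟩
  rw [SetLike.mem_coe, Submodule.mem_orthogonal_singleton_iff_inner_left]
  simp only [vsub_eq_sub, inner_sub_left, hS x hx, hS y hy, sub_self]

theorem finrank_orthogonal_span_singleton_of_ne_zero [FiniteDimensional ℝ E] {v : E}
    (hv : v ≠ 0) : finrank ℝ (ℝ ∙ v)ᗮ = finrank ℝ E - 1 := by
  have := Submodule.finrank_add_finrank_orthogonal (ℝ ∙ v)
  rw [finrank_span_singleton hv] at this
  omega

theorem mem_convexHull_filter_of_inner_eq (S : Finset E) {v x : E} {c : ℝ}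
    (hx : x ∈ convexHull ℝ (S : Set E)) (hS : ∀ y ∈ S, ⟪y, v⟫ ≤ c) (hxv : ⟪x, v⟫ = c) :
    x ∈ convexHull ℝ (S.filter fun y => ⟪y, v⟫ = c : Set E) := by
  obtain ⟨w, hw₀, hw₁, rfl⟩ := Finset.mem_convexHull'.mp hx
  have hgap : ∑ y ∈ S, w y * (c - ⟪y, v⟫) = 0 := by
    simp only [mul_sub, Finset.sum_sub_distrib, ← Finset.sum_mul, hw₁, one_mul, ← hxv,
      sum_inner, real_inner_smul_left, sub_self]
  have hsupp : ∀ y ∈ S, w y ≠ 0 → ⟪y, v⟫ = c := fun y hy hwy => by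
    have := (Finset.sum_eq_zero_iff_of_nonneg fun z hz =>
      mul_nonneg (hw₀ z hz) (sub_nonneg.2 (hS z hz))).mp hgap y hy
    linarith [(mul_eq_zero.mp this).resolve_left hwy]
  refine Finset.mem_convexHull'.mpr ⟨w, fun y hy => hw₀ y (Finset.mem_filter.mp hy).1, ?_, ?_⟩
  · rwa [Finset.sum_filter_of_ne hsupp]
  · exact Finset.sum_filter_of_ne fun y hy hwy => hsupp y hy (left_ne_zero_of_smul hwy)

theorem finite_setOf_mem_norm_eq_one {U : Submodule ℝ E} (hU : finrank ℝ U = 1) :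
    {w | w ∈ U ∧ ‖w‖ = 1}.Finite := by
  rcases Set.eq_empty_or_nonempty {w | w ∈ U ∧ ‖w‖ = 1} with h | ⟨w₀, hw₀U, hw₀⟩
  · simp [h]
  refine ((Set.finite_singleton w₀).insert (-w₀)).subset ?_
  rintro w ⟨hwU, hw⟩
  have hw₀0 : (⟨w₀, hw₀U⟩ : U) ≠ 0 := fun h => by simp_all
  obtain ⟨c, hc⟩ := (finrank_eq_one_iff_of_nonzero' _ hw₀0).mp hU ⟨w, hwU⟩
  replace hc : c • w₀ = w := congrArg Subtype.val hc
  have hc1 : |c| = 1 := by simpa [← hc, norm_smul, hw₀] using hw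
  rcases abs_eq zero_le_one |>.mp hc1 with rfl | rfl <;> simp [← hc]

variable [FiniteDimensional ℝ E]

theorem dimH_le_finrank_vectorSpan (s : Set E) : dimH s ≤ finrank ℝ (vectorSpan ℝ s) := by
  rcases s.eq_empty_or_nonempty with rfl | hs
  · simp
  calc dimH s ≤ dimH (affineSpan ℝ s : Set E) := dimH_mono (subset_affineSpan ℝ s)
    _ = finrank ℝ (vectorSpan ℝ s) := by
      rw [Real.Convex.dimH_eq_finrank_vectorSpan (affineSpan ℝ s).convex
        ((affineSpan_nonempty ℝ).2 hs), ← AffineSubspace.direction, direction_affineSpan]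

theorem hausdorffMeasure_eq_zero_of_finrank_vectorSpan_lt [MeasurableSpace E] [BorelSpace E]
    {s : Set E} {d : ℕ} (hs : finrank ℝ (vectorSpan ℝ s) < d) : μH[d] s = 0 := by
  have := hausdorffMeasure_of_dimH_lt (d := d)
    ((dimH_le_finrank_vectorSpan s).trans_lt (by exact_mod_cast hs))
  exact_mod_cast this

theorem hausdorffMeasure_lt_top_of_isCompact [MeasurableSpace E] [BorelSpace E]
    {W : Submodule ℝ E} {x₀ : E} {s : Set E} (hs : IsCompact s) (hsW : ∀ x ∈ s, x - x₀ ∈ W) :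
    μH[finrank ℝ W] s < ⊤ := by
  set g : W → E := fun w => x₀ + w
  have hg : Isometry g := Isometry.of_dist_eq fun a b => by simp [g, Subtype.dist_eq]
  have hrange : s ⊆ Set.range g := fun x hx => ⟨⟨x - x₀, hsW x hx⟩, by simp [g]⟩
  rw [← Set.inter_eq_left.mpr hrange, ← hg.hausdorffMeasure_preimage (Or.inl (by positivity))]
  exact (hg.isClosedEmbedding.isCompact_preimage hs).measure_lt_top

end General

theorem Euc.pos_of_ne_zero {n : ℕ} {v : Euc n} (hv : v ≠ 0) : 0 < n :=
  Nat.pos_of_ne_zero fun h => hv (by subst h; exact Subsingleton.elim _ _)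

section SupportFunction

variable {n : ℕ} {K L : Set (Euc n)} {v : Euc n}

theorem IsPolytope.isCompact (h : IsPolytope n K) : IsCompact K := by
  obtain ⟨S, -, rfl⟩ := h
  exact S.finite_toSet.isCompact_convexHull ℝ

theorem IsPolytope.convex_s7 (h : IsPolytope n K) : Convex ℝ K := by
  obtain ⟨S, -, rfl⟩ := h
  exact convex_convexHull ℝ _

theorem IsPolytope.nonempty_s7 (h : IsPolytope n K) : K.Nonempty := by
  obtain ⟨S, hS, rfl⟩ := h
  exact (Finset.coe_nonempty.mpr hS).convexHull

theorem bddAbove_image_inner (hK : IsCompact K) (v : Euc n) :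
    BddAbove ((fun x => ⟪x, v⟫) '' K) :=
  (hK.image (continuous_id.inner continuous_const)).bddAbove

theorem inner_le_suppFn (hK : IsCompact K) {x : Euc n} (hx : x ∈ K) (v : Euc n) :
    ⟪x, v⟫ ≤ suppFn K v :=
  le_csSup (bddAbove_image_inner hK v) ⟨x, hx, rfl⟩

theorem face_nonempty (hK : IsCompact K) (hK₀ : K.Nonempty) (v : Euc n) :
    (face K v).Nonempty := by
  obtain ⟨x, hx, hxv⟩ :=
    (hK.image (continuous_id.inner continuous_const)).sSup_mem (hK₀.image fun x => ⟪x, v⟫)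
  exact ⟨x, hx, hxv⟩

theorem isCompact_face (hK : IsCompact K) (v : Euc n) : IsCompact (face K v) :=
  hK.inter_right (isClosed_eq (continuous_id.inner continuous_const) continuous_const)

theorem suppFn_union_of_le (hK : IsCompact K) (hK₀ : K.Nonempty) (hL : IsCompact L)
    (hL₀ : L.Nonempty) (hLK : suppFn L v ≤ suppFn K v) : suppFn (K ∪ L) v = suppFn K v := by
  rw [suppFn, Set.image_union, csSup_union (bddAbove_image_inner hK v) (hK₀.image _)
    (bddAbove_image_inner hL v) (hL₀.image _)]
  exact max_eq_left hLK

theorem face_union_of_lt (hK : IsCompact K) (hK₀ : K.Nonempty) (hL : IsCompact L)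
    (hL₀ : L.Nonempty) (hLK : suppFn L v < suppFn K v) : face (K ∪ L) v = face K v := by
  ext x
  simp only [face, suppFn_union_of_le hK hK₀ hL hL₀ hLK.le, Set.mem_ofPred_eq, Set.mem_union]
  refine ⟨fun ⟨hx, hxv⟩ => ⟨hx.resolve_right fun hxL => ?_, hxv⟩, fun ⟨hx, hxv⟩ => ⟨.inl hx, hxv⟩⟩
  linarith [inner_le_suppFn hL hxL v]

theorem face_union_of_eq (hK : IsCompact K) (hK₀ : K.Nonempty) (hL : IsCompact L)
    (hL₀ : L.Nonempty) (hLK : suppFn L v = suppFn K v) :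
    face (K ∪ L) v = face K v ∪ face L v := by
  ext x
  simp only [face, suppFn_union_of_le hK hK₀ hL hL₀ hLK.le, hLK, Set.mem_ofPred_eq,
    Set.mem_union, or_and_right]

end SupportFunction

section ConvexUnion

variable {n : ℕ} {K L : Set (Euc n)} {v : Euc n}

theorem exists_mem_inter_face_of_convex_union (hK : IsCompact K) (hL : IsCompact L)
    (hU : Convex ℝ (K ∪ L)) {x y : Euc n} (hx : x ∈ face L v)
    (hy : y ∈ face K v) (hLK : suppFn L v ≤ suppFn K v) :
    ∃ a b : ℝ, a + b = 1 ∧ b * (suppFn K v - suppFn L v) = 0 ∧ a • x + b • y ∈ K ∩ face L v := by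
  obtain ⟨_, ⟨a, b, -, hb, hab, rfl⟩, hzK, hzL⟩ :=
    exists_mem_inter_segment_of_convex_union hK.isClosed hL.isClosed hU hx.1 hy.1
  obtain rfl : a = 1 - b := eq_sub_of_add_eq hab
  have hz : ⟪(1 - b) • x + b • y, v⟫ = suppFn L v + b * (suppFn K v - suppFn L v) := by
    rw [inner_add_left, real_inner_smul_left, real_inner_smul_left, hx.2, hy.2]
    ring
  have hb0 : b * (suppFn K v - suppFn L v) = 0 :=
    le_antisymm (by linarith [hz ▸ inner_le_suppFn hL hzL v])
      (mul_nonneg hb (sub_nonneg.2 hLK))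
  exact ⟨1 - b, b, hab, hb0, hzK, hzL, by rw [hz, hb0, add_zero]⟩

theorem inter_face_nonempty_of_convex_union (hK : IsCompact K) (hK₀ : K.Nonempty)
    (hL : IsCompact L) (hL₀ : L.Nonempty) (hU : Convex ℝ (K ∪ L)) (hLK : suppFn L v ≤ suppFn K v) :
    (K ∩ face L v).Nonempty := by
  obtain ⟨x, hx⟩ := face_nonempty hL hL₀ v
  obtain ⟨y, hy⟩ := face_nonempty hK hK₀ v
  obtain ⟨a, b, -, -, hz⟩ := exists_mem_inter_face_of_convex_union hK hL hU hx hy hLK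
  exact ⟨_, hz⟩

theorem face_subset_of_convex_union (hK : IsCompact K) (hK₀ : K.Nonempty)
    (hL : IsCompact L) (hU : Convex ℝ (K ∪ L)) (hLK : suppFn L v < suppFn K v) : face L v ⊆ K := by
  intro x hx
  obtain ⟨y, hy⟩ := face_nonempty hK hK₀ v
  obtain ⟨a, b, hab, hb0, hz, -⟩ := exists_mem_inter_face_of_convex_union hK hL hU hx hy hLK.le
  obtain rfl : b = 0 := (mul_eq_zero.mp hb0).resolve_right (sub_ne_zero.mpr hLK.ne')
  obtain rfl : a = 1 := by simpa using hab
  simpa using hz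

theorem suppFn_inter_of_convex_union (hK : IsCompact K) (hK₀ : K.Nonempty)
    (hL : IsCompact L) (hL₀ : L.Nonempty) (hU : Convex ℝ (K ∪ L)) (hLK : suppFn L v ≤ suppFn K v) :
    suppFn (K ∩ L) v = suppFn L v := by
  obtain ⟨x, hxK, hxL, hxv⟩ := inter_face_nonempty_of_convex_union hK hK₀ hL hL₀ hU hLK
  refine le_antisymm ?_ (hxv ▸ le_csSup ((bddAbove_image_inner hL v).mono
    (Set.image_mono Set.inter_subset_right)) ⟨x, ⟨hxK, hxL⟩, rfl⟩)
  refine csSup_le ⟨_, x, ⟨hxK, hxL⟩, rfl⟩ ?_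
  rintro _ ⟨z, hz, rfl⟩
  exact inner_le_suppFn hL hz.2 v

theorem face_inter_of_convex_union (hK : IsCompact K) (hK₀ : K.Nonempty)
    (hL : IsCompact L) (hL₀ : L.Nonempty) (hU : Convex ℝ (K ∪ L)) (hLK : suppFn L v ≤ suppFn K v) :
    face (K ∩ L) v = K ∩ face L v := by
  ext x
  simp only [face, suppFn_inter_of_convex_union hK hK₀ hL hL₀ hU hLK, Set.mem_ofPred_eq,
    Set.mem_inter_iff, and_assoc]

end ConvexUnion

section Volume

variable {n : ℕ} {S A B : Set (Euc n)} {v : Euc n} {c : ℝ}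

theorem Euc.finrank_orthogonal_span_singleton (hv : v ≠ 0) : finrank ℝ (ℝ ∙ v)ᗮ = n - 1 := by
  rw [finrank_orthogonal_span_singleton_of_ne_zero hv, finrank_euclideanSpace_fin]

theorem voln1_eq_zero_of_pdim_ne (hv : v ≠ 0) (hS : ∀ x ∈ S, ⟪x, v⟫ = c)
    (hd : pdim S ≠ n - 1) : voln1 S = 0 := by
  have hle : pdim S ≤ n - 1 :=
    Euc.finrank_orthogonal_span_singleton hv ▸
      Submodule.finrank_mono (vectorSpan_le_orthogonal_of_inner_eq hS)
  rw [voln1, ← Nat.cast_pred (Euc.pos_of_ne_zero hv),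
    hausdorffMeasure_eq_zero_of_finrank_vectorSpan_lt (lt_of_le_of_ne hle hd),
    ENNReal.toReal_zero]

theorem hausdorffMeasure_lt_top_of_inner_eq (hv : v ≠ 0) (hS : IsCompact S)
    (hSv : ∀ x ∈ S, ⟪x, v⟫ = c) : μH[(n : ℝ) - 1] S < ⊤ := by
  rcases S.eq_empty_or_nonempty with rfl | ⟨x₀, hx₀⟩
  · simp
  have hsW : ∀ x ∈ S, x - x₀ ∈ (ℝ ∙ v)ᗮ := fun x hx =>
    Submodule.mem_orthogonal_singleton_iff_inner_left.mpr
      (by rw [inner_sub_left, hSv x hx, hSv x₀ hx₀, sub_self])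
  have := hausdorffMeasure_lt_top_of_isCompact hS hsW
  rwa [Euc.finrank_orthogonal_span_singleton hv, Nat.cast_pred (Euc.pos_of_ne_zero hv)] at this

theorem voln1_union_add_inter (hv : v ≠ 0) (hA : IsCompact A) (hB : IsCompact B)
    (hAv : ∀ x ∈ A, ⟪x, v⟫ = c) (hBv : ∀ x ∈ B, ⟪x, v⟫ = c) :
    voln1 (A ∪ B) + voln1 (A ∩ B) = voln1 A + voln1 B :=
  measureReal_union_add_inter hB.isClosed.measurableSet
    (hausdorffMeasure_lt_top_of_inner_eq hv hA hAv).ne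
    (hausdorffMeasure_lt_top_of_inner_eq hv hB hBv).ne

end Volume

section FacetSum

variable {n : ℕ} {V : Type*} [AddCommGroup V] [Module ℝ V] (f : ℝ → Euc n → V)

def facetTerm (P : Set (Euc n)) : Euc n → V :=
  (normals n P).indicator fun v => voln1 (face P v) • f (suppFn P v) v

theorem facetTerm_of_norm_eq_one (P : Set (Euc n)) {v : Euc n} (hv : ‖v‖ = 1) :
    facetTerm f P v = voln1 (face P v) • f (suppFn P v) v := by
  by_cases hvP : v ∈ normals n P
  · exact Set.indicator_of_mem hvP _
  rw [facetTerm, Set.indicator_of_notMem hvP,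
    voln1_eq_zero_of_pdim_ne (norm_ne_zero_iff.mp (by simp [hv])) (fun x hx => hx.2)
      fun hd => hvP ⟨hv, hd⟩, zero_smul]

theorem facetTerm_union_add_inter {K L : Set (Euc n)} (hK : IsCompact K) (hK₀ : K.Nonempty)
    (hL : IsCompact L) (hL₀ : L.Nonempty) (hU : Convex ℝ (K ∪ L)) (v : Euc n) :
    facetTerm f (K ∪ L) v + facetTerm f (K ∩ L) v = facetTerm f K v + facetTerm f L v := by
  by_cases hv : ‖v‖ = 1
  swap
  · simp [facetTerm, Set.indicator_of_notMem, normals, hv]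
  wlog hLK : suppFn L v ≤ suppFn K v generalizing K L
  · have := this hL hL₀ hK hK₀ (Set.union_comm K L ▸ hU) (le_of_not_ge hLK)
    rwa [Set.union_comm, Set.inter_comm, add_comm (facetTerm f L v)] at this
  simp only [facetTerm_of_norm_eq_one f _ hv, suppFn_union_of_le hK hK₀ hL hL₀ hLK,
    suppFn_inter_of_convex_union hK hK₀ hL hL₀ hU hLK,
    face_inter_of_convex_union hK hK₀ hL hL₀ hU hLK]
  rcases hLK.lt_or_eq with hlt | heq
  · rw [face_union_of_lt hK hK₀ hL hL₀ hlt,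
      Set.inter_eq_right.mpr (face_subset_of_convex_union hK hK₀ hL hU hlt)]
  have hKL : K ∩ face L v = face K v ∩ face L v := by
    ext x
    simp only [face, Set.mem_inter_iff, Set.mem_ofPred_eq, heq]
    tauto
  rw [face_union_of_eq hK hK₀ hL hL₀ heq, hKL, heq, ← add_smul, ← add_smul,
    voln1_union_add_inter (norm_ne_zero_iff.mp (by simp [hv])) (isCompact_face hK v)
      (isCompact_face hL v) (fun x hx => hx.2) (fun x hx => hx.2.trans heq)]

end FacetSum

section Finiteness

variable {n : ℕ}

theorem face_convexHull (S : Finset (Euc n)) (v : Euc n) :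
    face (convexHull ℝ (S : Set (Euc n))) v = convexHull ℝ
      (S.filter fun y => ⟪y, v⟫ = suppFn (convexHull ℝ (S : Set (Euc n))) v : Set (Euc n)) := by
  have hP := S.finite_toSet.isCompact_convexHull ℝ
  refine subset_antisymm (fun x hx => mem_convexHull_filter_of_inner_eq S hx.1
    (fun y hy => inner_le_suppFn hP (subset_convexHull ℝ _ hy) v) hx.2) (convexHull_min ?_ ?_)
  · intro y hy
    exact ⟨subset_convexHull ℝ _ (Finset.mem_filter.mp hy).1, (Finset.mem_filter.mp hy).2⟩
  · exact (convex_convexHull ℝ _).inter (convex_hyperplane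
      ⟨fun x y => inner_add_left x y v, fun c x => real_inner_smul_left x v c⟩ _)

theorem finite_normals_of_face_eq (F : Set (Euc n)) (P : Set (Euc n)) :
    {v | v ∈ normals n P ∧ face P v = F}.Finite := by
  rcases Set.eq_empty_or_nonempty {v | v ∈ normals n P ∧ face P v = F} with
    h | ⟨v₀, ⟨hv₀, hd⟩, rfl⟩
  · simp [h]
  have hn := Euc.pos_of_ne_zero (norm_ne_zero_iff.mp (by simp [hv₀]) : v₀ ≠ 0)
  have hrank : finrank ℝ (vectorSpan ℝ (face P v₀))ᗮ = 1 := by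
    have := Submodule.finrank_add_finrank_orthogonal (vectorSpan ℝ (face P v₀))
    rw [finrank_euclideanSpace_fin] at this
    unfold pdim at hd
    omega
  refine (finite_setOf_mem_norm_eq_one hrank).subset ?_
  rintro v ⟨⟨hv, -⟩, hvF⟩
  refine ⟨fun u hu => ?_, hv⟩
  rw [← hvF] at hu
  exact Submodule.mem_orthogonal_singleton_iff_inner_left.mp
    (vectorSpan_le_orthogonal_of_inner_eq (fun x hx => hx.2) hu)

theorem IsPolytope.finite_normals {P : Set (Euc n)} (hP : IsPolytope n P) :
    (normals n P).Finite := by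
  obtain ⟨S, -, rfl⟩ := hP
  set P := convexHull ℝ (S : Set (Euc n))
  have hcover : normals n P ⊆ ⋃ t ∈ (S.powerset : Set (Finset (Euc n))),
      {v | v ∈ normals n P ∧ face P v = convexHull ℝ ↑t} := fun v hv =>
    Set.mem_biUnion (Finset.mem_powerset.mpr (Finset.filter_subset _ S)) ⟨hv, face_convexHull S v⟩
  exact (S.powerset.finite_toSet.biUnion fun t _ => finite_normals_of_face_eq _ P).subset hcover

end Finiteness

theorem stmt7_general (n : ℕ) {V : Type*} [AddCommGroup V] [Module ℝ V]
    (f : ℝ → Euc n → V) (Φ : Set (Euc n) → V)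
    (hΦ : ∀ P : Set (Euc n),
      Φ P = ∑ᶠ v ∈ normals n P, voln1 (face P v) • f (suppFn P v) v) :
    ∀ P Q : Set (Euc n), IsPolytope n P → IsPolytope n Q → IsPolytope n (P ∪ Q) →
      Φ (P ∪ Q) + Φ (P ∩ Q) = Φ P + Φ Q := by
  intro P Q hP hQ hPQ
  have hΦ' (R : Set (Euc n)) : Φ R = ∑ᶠ v, facetTerm f R v := (hΦ R).trans (finsum_mem_def _ _)
  have hpt := facetTerm_union_add_inter f hP.isCompact hP.nonempty_s7 hQ.isCompact hQ.nonempty_s7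
    hPQ.convex_s7
  have hfin {R : Set (Euc n)} (hR : IsPolytope n R) : (Function.support (facetTerm f R)).Finite :=
    hR.finite_normals.subset (Set.support_indicator_subset)
  have hfinI : (Function.support (facetTerm f (P ∩ Q))).Finite := by
    refine ((hfin hP).union ((hfin hQ).union (hfin hPQ))).subset fun v hv => ?_
    by_contra h
    simp only [Set.mem_union, Function.mem_support, not_or, not_not] at h
    exact hv (by simpa [h.1, h.2.1, h.2.2] using hpt v)
  rw [hΦ', hΦ', hΦ', hΦ', ← finsum_add_distrib (hfin hPQ) hfinI,
    ← finsum_add_distrib (hfin hP) (hfin hQ)]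
  exact finsum_congr hpt

/-- For any real vector space `V` and any function `f : ℝ × S^{n−1} → V`
(modelled as `f : ℝ → Euc n → V`; only values at unit vectors matter), the map
`Φ P = Σ_{v ∈ 𝒩(P)} vol_{n−1}(F(P,v)) • f(h(P,v), v)` is a valuation on `𝒫ⁿ`. -/
theorem stmt7 (n : ℕ) (hn : 1 ≤ n) {V : Type*} [AddCommGroup V] [Module ℝ V]
    (f : ℝ → Euc n → V) (Φ : Set (Euc n) → V)
    (hΦ : ∀ P : Set (Euc n),
      Φ P = ∑ᶠ v ∈ normals n P, voln1 (face P v) • f (suppFn P v) v) :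
    ∀ P Q : Set (Euc n), IsPolytope n P → IsPolytope n Q → IsPolytope n (P ∪ Q) →
      Φ (P ∪ Q) + Φ (P ∩ Q) = Φ P + Φ Q :=
  stmt7_general n f Φ hΦ
end
end
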